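/- Let f₁, f₂ : ℝ → ℝ be smooth functions with f₁(0) = f₂(0). For ε > 0 define the cubic polynomial f̃_ε(t) = ((t+ε)/(2ε))·f₂(ε) − ((t−ε)/(2ε))·f₁(−ε) + ((t−ε)²·(t+ε)/(4ε²))·[f₁'(−ε) − (f₂(ε) − f₁(−ε))/(2ε)] + ((t+ε)²·(t−ε)/(4ε²))·[f₂'(ε) − (f₂(ε) − f₁(−ε))/(2ε)]. Then: (i) f̃_ε(−ε) = f₁(−ε), f̃_ε(ε) = f₂(ε), f̃_ε'(−ε) = f₁'(−ε) and f̃_ε'(ε) = f₂'(ε); (ii) there exist C > 0 and ε₀ > 0 such that |f̃_ε'(t)| ≤ C for all ε ∈ (0, ε₀) and all t ∈ [−ε, ε]; and (iii) both ε·f̃_ε''(ε) and ε·f̃_ε''(−ε) converge to (1/2)·(f₂'(0) − f₁'(0)) as ε → 0⁺. -/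

import Mathlib

/-!
`f̃_ε` is the cubic Hermite interpolant of the data `(f₁(-ε), f₁'(-ε))` at `-ε` and
`(f₂(ε), f₂'(ε))` at `ε`, written around the secant slope `s_ε = (f₂(ε) - f₁(-ε))/(2ε)`.
Its derivative is `s_ε` plus the two slope defects `f₁'(-ε) - s_ε`, `f₂'(ε) - s_ε` weighted by
coefficients bounded by `1` on `[-ε, ε]`, and `ε f̃_ε''(±ε)` is a fixed linear combination of
`f₁'(-ε)`, `f₂'(ε)` and `s_ε`. Because `f₁(0) = f₂(0)`, `2 s_ε` is the difference quotient at `0`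
of `t ↦ f₂(t) - f₁(-t)`, so `s_ε → (f₁'(0) + f₂'(0))/2`. All three quantities therefore
converge as `ε → 0⁺`, which gives both the uniform bound and the limits.
-/

open Filter Set Topology

section HermiteCubic

variable (ε a b da db : ℝ)

noncomputable def hermiteCubic (t : ℝ) : ℝ :=
  ((t + ε) / (2 * ε)) * b - ((t - ε) / (2 * ε)) * a
    + ((t - ε) ^ 2 * (t + ε) / (4 * ε ^ 2)) * (da - (b - a) / (2 * ε))
    + ((t + ε) ^ 2 * (t - ε) / (4 * ε ^ 2)) * (db - (b - a) / (2 * ε))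

noncomputable def hermiteCubicDeriv (t : ℝ) : ℝ :=
  (b - a) / (2 * ε)
    + (t - ε) * (3 * t + ε) / (4 * ε ^ 2) * (da - (b - a) / (2 * ε))
    + (t + ε) * (3 * t - ε) / (4 * ε ^ 2) * (db - (b - a) / (2 * ε))

variable {ε a b da db : ℝ}

theorem hasDerivAt_hermiteCubic (hε : ε ≠ 0) (t : ℝ) :
    HasDerivAt (hermiteCubic ε a b da db) (hermiteCubicDeriv ε a b da db t) t := by
  have hp : HasDerivAt (fun t : ℝ => t + ε) 1 t := (hasDerivAt_id' t).add_const ε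
  have hm : HasDerivAt (fun t : ℝ => t - ε) 1 t := (hasDerivAt_id' t).sub_const ε
  have H := ((((hp.div_const (2 * ε)).mul_const b).sub ((hm.div_const (2 * ε)).mul_const a)).add
    ((((hm.pow 2).mul hp).div_const (4 * ε ^ 2)).mul_const (da - (b - a) / (2 * ε)))).add
    ((((hp.pow 2).mul hm).div_const (4 * ε ^ 2)).mul_const (db - (b - a) / (2 * ε)))
  exact H.congr_deriv (by unfold hermiteCubicDeriv; simp only [Pi.pow_apply]; field_simp; ring)

theorem deriv_hermiteCubic (hε : ε ≠ 0) :
    deriv (hermiteCubic ε a b da db) = hermiteCubicDeriv ε a b da db :=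
  funext fun t => (hasDerivAt_hermiteCubic hε t).deriv

theorem deriv_hermiteCubicDeriv (t : ℝ) :
    deriv (hermiteCubicDeriv ε a b da db) t =
      (6 * t - 2 * ε) / (4 * ε ^ 2) * (da - (b - a) / (2 * ε))
        + (6 * t + 2 * ε) / (4 * ε ^ 2) * (db - (b - a) / (2 * ε)) := by
  have hp : HasDerivAt (fun t : ℝ => t + ε) 1 t := (hasDerivAt_id' t).add_const ε
  have hm : HasDerivAt (fun t : ℝ => t - ε) 1 t := (hasDerivAt_id' t).sub_const ε
  have h3 : HasDerivAt (fun t : ℝ => 3 * t) 3 t := by simpa using (hasDerivAt_id' t).const_mul 3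
  have H := ((hasDerivAt_const t ((b - a) / (2 * ε))).add
    (((hm.mul (h3.add_const ε)).div_const (4 * ε ^ 2)).mul_const (da - (b - a) / (2 * ε)))).add
    (((hp.mul (h3.sub_const ε)).div_const (4 * ε ^ 2)).mul_const (db - (b - a) / (2 * ε)))
  exact (H.congr_deriv (by ring)).deriv

theorem hermiteCubic_neg (hε : ε ≠ 0) : hermiteCubic ε a b da db (-ε) = a := by
  unfold hermiteCubic
  field_simp
  ring

theorem hermiteCubic_self (hε : ε ≠ 0) : hermiteCubic ε a b da db ε = b := by
  unfold hermiteCubic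
  field_simp
  ring

theorem hermiteCubicDeriv_neg (hε : ε ≠ 0) : hermiteCubicDeriv ε a b da db (-ε) = da := by
  unfold hermiteCubicDeriv
  field_simp
  ring

theorem hermiteCubicDeriv_self (hε : ε ≠ 0) : hermiteCubicDeriv ε a b da db ε = db := by
  unfold hermiteCubicDeriv
  field_simp
  ring

theorem mul_deriv_hermiteCubicDeriv_self (hε : ε ≠ 0) :
    ε * deriv (hermiteCubicDeriv ε a b da db) ε = da + 2 * db - 3 * ((b - a) / (2 * ε)) := by
  rw [deriv_hermiteCubicDeriv]
  field_simp
  ring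

theorem mul_deriv_hermiteCubicDeriv_neg (hε : ε ≠ 0) :
    ε * deriv (hermiteCubicDeriv ε a b da db) (-ε) =
      3 * ((b - a) / (2 * ε)) - 2 * da - db := by
  rw [deriv_hermiteCubicDeriv]
  field_simp
  ring

theorem abs_hermiteCubicDeriv_le (hε : 0 < ε) {t : ℝ} (ht : t ∈ Icc (-ε) ε) :
    |hermiteCubicDeriv ε a b da db t| ≤
      |(b - a) / (2 * ε)| + |da - (b - a) / (2 * ε)| + |db - (b - a) / (2 * ε)| := by
  obtain ⟨ht₁, ht₂⟩ := ht
  have h4ε : (0 : ℝ) < 4 * ε ^ 2 := by positivity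
  have hcoef₁ : |(t - ε) * (3 * t + ε) / (4 * ε ^ 2)| ≤ 1 := by
    rw [abs_div, abs_of_pos h4ε, div_le_one h4ε, abs_le]
    constructor <;> nlinarith
  have hcoef₂ : |(t + ε) * (3 * t - ε) / (4 * ε ^ 2)| ≤ 1 := by
    rw [abs_div, abs_of_pos h4ε, div_le_one h4ε, abs_le]
    constructor <;> nlinarith
  calc |hermiteCubicDeriv ε a b da db t|
      ≤ |(b - a) / (2 * ε)| + |(t - ε) * (3 * t + ε) / (4 * ε ^ 2)| * |da - (b - a) / (2 * ε)|
          + |(t + ε) * (3 * t - ε) / (4 * ε ^ 2)| * |db - (b - a) / (2 * ε)| := by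
        rw [← abs_mul, ← abs_mul]
        exact abs_add_three _ _ _
    _ ≤ |(b - a) / (2 * ε)| + 1 * |da - (b - a) / (2 * ε)| + 1 * |db - (b - a) / (2 * ε)| := by
        gcongr
    _ = _ := by ring

end HermiteCubic

theorem HasDerivAt.tendsto_sub_comp_neg_div_two_mul {f₁ f₂ : ℝ → ℝ} {d₁ d₂ : ℝ}
    (h₁ : HasDerivAt f₁ d₁ 0) (h₂ : HasDerivAt f₂ d₂ 0) (h0 : f₁ 0 = f₂ 0) :
    Tendsto (fun ε => (f₂ ε - f₁ (-ε)) / (2 * ε)) (𝓝[≠] 0) (𝓝 ((d₂ + d₁) / 2)) := by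
  rw [← neg_zero] at h₁
  have hg := (h₂.sub (h₁.comp 0 (hasDerivAt_neg 0))).tendsto_slope_zero.div_const 2
  rw [mul_neg_one, sub_neg_eq_add] at hg
  refine hg.congr fun ε => ?_
  simp only [Pi.sub_apply, Function.comp_apply, zero_add, neg_zero, h0, sub_self, sub_zero,
    smul_eq_mul]
  ring

theorem exists_pos_bound_Ioo_of_tendsto {g : ℝ → ℝ} {a L : ℝ} (h : Tendsto g (𝓝[>] a) (𝓝 L)) :
    ∃ C, 0 < C ∧ ∃ b, a < b ∧ ∀ x ∈ Ioo a b, g x ≤ C := by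
  have hL : L < |L| + 1 := (le_abs_self L).trans_lt (lt_add_one _)
  obtain ⟨b, hab, hsub⟩ := mem_nhdsGT_iff_exists_Ioo_subset.1 (h.eventually_lt_const hL)
  exact ⟨|L| + 1, by positivity, b, hab, fun x hx => (hsub hx).le⟩

theorem cubic_spline_interpolation (f₁ f₂ : ℝ → ℝ)
    (hf₁ : ContDiff ℝ (⊤ : ℕ∞) f₁) (hf₂ : ContDiff ℝ (⊤ : ℕ∞) f₂)
    (h0 : f₁ 0 = f₂ 0)
    (F : ℝ → ℝ → ℝ)
    (hF : ∀ ε t, F ε t =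
      ((t + ε) / (2 * ε)) * f₂ ε - ((t - ε) / (2 * ε)) * f₁ (-ε)
      + ((t - ε) ^ 2 * (t + ε) / (4 * ε ^ 2)) *
          (deriv f₁ (-ε) - (f₂ ε - f₁ (-ε)) / (2 * ε))
      + ((t + ε) ^ 2 * (t - ε) / (4 * ε ^ 2)) *
          (deriv f₂ ε - (f₂ ε - f₁ (-ε)) / (2 * ε))) :
    (∀ ε : ℝ, 0 < ε →
      F ε (-ε) = f₁ (-ε) ∧ F ε ε = f₂ ε ∧
      deriv (F ε) (-ε) = deriv f₁ (-ε) ∧ deriv (F ε) ε = deriv f₂ ε) ∧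
    (∃ C : ℝ, 0 < C ∧ ∃ ε₀ : ℝ, 0 < ε₀ ∧
      ∀ ε ∈ Set.Ioo 0 ε₀, ∀ t ∈ Set.Icc (-ε) ε, |deriv (F ε) t| ≤ C) ∧
    Tendsto (fun ε => ε * deriv (deriv (F ε)) ε) (nhdsWithin 0 (Set.Ioi 0))
      (nhds ((deriv f₂ 0 - deriv f₁ 0) / 2)) ∧
    Tendsto (fun ε => ε * deriv (deriv (F ε)) (-ε)) (nhdsWithin 0 (Set.Ioi 0))
      (nhds ((deriv f₂ 0 - deriv f₁ 0) / 2)) := by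
  obtain rfl : F = fun ε => hermiteCubic ε (f₁ (-ε)) (f₂ ε) (deriv f₁ (-ε)) (deriv f₂ ε) :=
    funext fun ε => funext (hF ε)
  have hd₁ : Continuous (deriv f₁) := hf₁.continuous_deriv (by simp)
  have hd₂ : Continuous (deriv f₂) := hf₂.continuous_deriv (by simp)
  have hs := ((hf₁.differentiable (by simp) 0).hasDerivAt.tendsto_sub_comp_neg_div_two_mul
    (hf₂.differentiable (by simp) 0).hasDerivAt h0).mono_left (nhdsGT_le_nhdsNE 0)
  have hda : Tendsto (fun ε => deriv f₁ (-ε)) (𝓝[>] 0) (𝓝 (deriv f₁ 0)) := by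
    simpa [Function.comp_def] using
      ((hd₁.comp continuous_neg).tendsto 0).mono_left nhdsWithin_le_nhds
  have hdb : Tendsto (deriv f₂) (𝓝[>] 0) (𝓝 (deriv f₂ 0)) :=
    (hd₂.tendsto 0).mono_left nhdsWithin_le_nhds
  refine ⟨fun ε hε => ?_, ?_, ?_, ?_⟩
  · rw [deriv_hermiteCubic hε.ne']
    exact ⟨hermiteCubic_neg hε.ne', hermiteCubic_self hε.ne', hermiteCubicDeriv_neg hε.ne',
      hermiteCubicDeriv_self hε.ne'⟩
  · obtain ⟨C, hC, ε₀, hε₀, hbound⟩ :=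
      exists_pos_bound_Ioo_of_tendsto ((hs.abs.add (hda.sub hs).abs).add (hdb.sub hs).abs)
    refine ⟨C, hC, ε₀, hε₀, fun ε hε t ht => ?_⟩
    rw [deriv_hermiteCubic hε.1.ne']
    exact (abs_hermiteCubicDeriv_le hε.1 ht).trans (hbound ε hε)
  · rw [show (deriv f₂ 0 - deriv f₁ 0) / 2
        = deriv f₁ 0 + 2 * deriv f₂ 0 - 3 * ((deriv f₂ 0 + deriv f₁ 0) / 2) by ring]
    refine ((hda.add (hdb.const_mul 2)).sub (hs.const_mul 3)).congr' ?_
    filter_upwards [self_mem_nhdsWithin] with ε (hε : 0 < ε)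
    rw [deriv_hermiteCubic hε.ne', mul_deriv_hermiteCubicDeriv_self hε.ne']
  · rw [show (deriv f₂ 0 - deriv f₁ 0) / 2
        = 3 * ((deriv f₂ 0 + deriv f₁ 0) / 2) - 2 * deriv f₁ 0 - deriv f₂ 0 by ring]
    refine (((hs.const_mul 3).sub (hda.const_mul 2)).sub hdb).congr' ?_
    filter_upwards [self_mem_nhdsWithin] with ε (hε : 0 < ε)
    rw [deriv_hermiteCubic hε.ne', mul_deriv_hermiteCubicDeriv_neg hε.ne']
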